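/- Fix real numbers ξ, θ, θ⁻ with θ⁻ ≠ θ, and 0 < σ_min < σ_max. With σᵢ = σ_min + ((i−1)/(N−1))·(σ_max − σ_min), Dᵢᴺ(θ, θ⁻) = (σ_min/σᵢ₊₁)ξ + (1 − σ_min/σᵢ₊₁)θ − (σ_min/σᵢ)ξ − (1 − σ_min/σᵢ)θ⁻, and Gᴺ(θ, θ⁻) = (2/(N−1))·Σ_{i=1}^{N−1} Dᵢᴺ(θ, θ⁻)·(1 − σ_min/σᵢ₊₁), the unscaled gradient satisfies lim_{N→∞} Gᴺ(θ, θ⁻) = (2(θ − θ⁻)/(σ_max − σ_min)) · ∫_{σ_min}^{σ_max} (1 − σ_min/σ)² dσ, which is nonzero. -/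

import Mathlib

open Filter Finset

/-- The `i`-th noise level of the uniform discretization with `N` steps. -/
noncomputable def sigmaLvl (σmin σmax : ℝ) (N i : ℕ) : ℝ :=
  σmin + (((i : ℝ) - 1) / ((N : ℝ) - 1)) * (σmax - σmin)

/-- The difference `Dᵢᴺ(θ, θ⁻)` of student and teacher outputs in the toy model. -/
noncomputable def Dtoy (ξ θ θm σmin σmax : ℝ) (N i : ℕ) : ℝ :=
  (σmin / sigmaLvl σmin σmax N (i + 1)) * ξ + (1 - σmin / sigmaLvl σmin σmax N (i + 1)) * θ
    - (σmin / sigmaLvl σmin σmax N i) * ξ - (1 - σmin / sigmaLvl σmin σmax N i) * θm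

/-- The gradient `Gᴺ(θ, θ⁻)` of the toy consistency loss in `θ`. -/
noncomputable def Gtoy (ξ θ θm σmin σmax : ℝ) (N : ℕ) : ℝ :=
  (2 / ((N : ℝ) - 1)) * ∑ i ∈ Finset.Icc 1 (N - 1),
    Dtoy ξ θ θm σmin σmax N i * (1 - σmin / sigmaLvl σmin σmax N (i + 1))

/-!
With `g s = 1 - σmin / s` and `σᵢ` the uniform grid on `[σmin, σmax]`, the summand
`Dᵢᴺ · g(σᵢ₊₁)` equals `(θ - θ⁻) g(σᵢ) g(σᵢ₊₁) + (θ - ξ) (g(σᵢ₊₁) - g(σᵢ)) g(σᵢ₊₁)`.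
Since `g ≥ 0` is increasing, `g(σᵢ) g(σᵢ₊₁)` lies between `g(σᵢ)²` and `g(σᵢ₊₁)²`, so the first
part is squeezed between the left and right Riemann sums of the monotone function `g²`, whose gap
is `O(1/N)`. The second sum telescopes below `g(σmax)² ≤ 1`, so with the prefactor `2/(N-1)` it
vanishes. The limit is nonzero because `g² > 0` on `(σmin, σmax]`.
-/

open Set intervalIntegral

noncomputable def uniformGrid (a b : ℝ) (M : ℕ) (t : ℝ) : ℝ := a + (b - a) / M * t

section UniformGrid

variable {a b : ℝ} {M : ℕ}

@[simp] lemma uniformGrid_zero : uniformGrid a b M 0 = a := by simp [uniformGrid]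

lemma uniformGrid_natCast_self (hM : M ≠ 0) : uniformGrid a b M M = b := by
  simp [uniformGrid, div_mul_cancel₀ (b - a) (Nat.cast_ne_zero.2 hM : (M : ℝ) ≠ 0)]

lemma monotone_uniformGrid (hab : a ≤ b) : Monotone (uniformGrid a b M) := fun _ _ hst =>
  (add_le_add_iff_left a).2
    (mul_le_mul_of_nonneg_left hst (div_nonneg (sub_nonneg.2 hab) M.cast_nonneg))

lemma le_uniformGrid (hab : a ≤ b) {t : ℝ} (ht : 0 ≤ t) : a ≤ uniformGrid a b M t := by
  simpa using monotone_uniformGrid (M := M) hab ht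

lemma uniformGrid_mem_Icc (hab : a ≤ b) (hM : M ≠ 0) {t : ℝ} (ht : t ∈ Icc 0 (M : ℝ)) :
    uniformGrid a b M t ∈ Icc a b :=
  ⟨le_uniformGrid hab ht.1, (monotone_uniformGrid hab ht.2).trans_eq (uniformGrid_natCast_self hM)⟩

lemma integral_eq_mul_integral_comp_uniformGrid (f : ℝ → ℝ) (hab : a < b) (hM : M ≠ 0) :
    ∫ x in a..b, f x = (b - a) / M * ∫ t in (0 : ℝ)..M, f (uniformGrid a b M t) := by
  have hh : (b - a) / M ≠ 0 := div_ne_zero (sub_ne_zero.2 hab.ne') (Nat.cast_ne_zero.2 hM)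
  simp only [uniformGrid]
  rw [integral_comp_add_mul f hh, smul_eq_mul, mul_inv_cancel_left₀ hh, mul_zero, add_zero,
    div_mul_cancel₀ _ (Nat.cast_ne_zero.2 hM), add_sub_cancel]

end UniformGrid

section Riemann

variable {f : ℝ → ℝ} {a b : ℝ} {M : ℕ}

lemma MonotoneOn.comp_uniformGrid (hf : MonotoneOn f (Icc a b)) (hab : a ≤ b) (hM : M ≠ 0) :
    MonotoneOn (fun t => f (uniformGrid a b M t)) (Icc 0 M) :=
  hf.comp ((monotone_uniformGrid hab).monotoneOn _) fun _ ht => uniformGrid_mem_Icc hab hM ht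

theorem MonotoneOn.mul_sum_uniformGrid_le_integral (hf : MonotoneOn f (Icc a b)) (hab : a ≤ b)
    (hM : M ≠ 0) :
    (b - a) / M * ∑ k ∈ range M, f (uniformGrid a b M k) ≤ ∫ x in a..b, f x := by
  rcases hab.eq_or_lt with rfl | hab
  · simp
  rw [integral_eq_mul_integral_comp_uniformGrid f hab hM]
  have := MonotoneOn.sum_le_integral (x₀ := 0) (by simpa using hf.comp_uniformGrid hab.le hM)
  simp only [zero_add] at this
  gcongr

theorem MonotoneOn.integral_le_mul_sum_uniformGrid (hf : MonotoneOn f (Icc a b)) (hab : a ≤ b)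
    (hM : M ≠ 0) :
    ∫ x in a..b, f x ≤ (b - a) / M * ∑ k ∈ range M, f (uniformGrid a b M (k + 1)) := by
  rcases hab.eq_or_lt with rfl | hab
  · simp
  rw [integral_eq_mul_integral_comp_uniformGrid f hab hM]
  have := MonotoneOn.integral_le_sum (x₀ := 0) (by simpa using hf.comp_uniformGrid hab.le hM)
  simp only [zero_add, Nat.cast_add, Nat.cast_one] at this
  gcongr

theorem MonotoneOn.tendsto_mul_sum_uniformGrid (hf : MonotoneOn f (Icc a b)) (hab : a ≤ b)
    {s : ℕ → ℕ → ℝ}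
    (hs : ∀ M, ∀ k < M, f (uniformGrid a b M k) ≤ s M k ∧ s M k ≤ f (uniformGrid a b M (k + 1))) :
    Tendsto (fun M : ℕ => (b - a) / M * ∑ k ∈ range M, s M k) atTop
      (nhds (∫ x in a..b, f x)) := by
  have hgap : ∀ M : ℕ, M ≠ 0 →
      (b - a) / M * ∑ k ∈ range M, f (uniformGrid a b M (k + 1))
        - (b - a) / M * ∑ k ∈ range M, f (uniformGrid a b M k) = (b - a) * (f b - f a) / M := by
    intro M hM
    have := sum_range_sub (fun k : ℕ => f (uniformGrid a b M k)) M
    push_cast at this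
    rw [← mul_sub, ← sum_sub_distrib, this, uniformGrid_natCast_self hM, uniformGrid_zero]
    ring
  have hδ := tendsto_const_div_atTop_nhds_zero_nat ((b - a) * (f b - f a))
  refine tendsto_of_tendsto_of_tendsto_of_le_of_le' (by simpa using tendsto_const_nhds.sub hδ)
    (by simpa using tendsto_const_nhds.add hδ) ?_ ?_
  all_goals
    filter_upwards [eventually_ne_atTop 0] with M hM
    have hlo := hf.mul_sum_uniformGrid_le_integral hab hM
    have hhi := hf.integral_le_mul_sum_uniformGrid hab hM
    have hh : 0 ≤ (b - a) / M := div_nonneg (sub_nonneg.2 hab) M.cast_nonneg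
    have hsl : (b - a) / M * ∑ k ∈ range M, f (uniformGrid a b M k)
        ≤ (b - a) / M * ∑ k ∈ range M, s M k :=
      mul_le_mul_of_nonneg_left (sum_le_sum fun k hk => (hs M k (mem_range.1 hk)).1) hh
    have hsu : (b - a) / M * ∑ k ∈ range M, s M k
        ≤ (b - a) / M * ∑ k ∈ range M, f (uniformGrid a b M (k + 1)) :=
      mul_le_mul_of_nonneg_left (sum_le_sum fun k hk => (hs M k (mem_range.1 hk)).2) hh
    linarith [hgap M hM]

end Riemann

lemma Monotone.sum_range_sub_mul_le_sq_sub_sq {u : ℕ → ℝ} (hu : Monotone u) (h0 : 0 ≤ u 0)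
    (M : ℕ) : ∑ k ∈ range M, (u (k + 1) - u k) * u (k + 1) ≤ u M ^ 2 - u 0 ^ 2 := by
  rw [← sum_range_sub (fun k => u k ^ 2)]
  gcongr with k
  nlinarith [hu k.le_succ, h0.trans (hu k.zero_le)]

lemma tendsto_div_mul_sum_sub_mul_self {u : ℕ → ℕ → ℝ} {C : ℝ} (hu : ∀ M, Monotone (u M))
    (h0 : ∀ M, 0 ≤ u M 0) (hC : ∀ M, u M M ≤ C) (c : ℝ) :
    Tendsto (fun M : ℕ => c / M * ∑ k ∈ range M, (u M (k + 1) - u M k) * u M (k + 1)) atTop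
      (nhds 0) := by
  refine squeeze_zero_norm (fun M => ?_) (tendsto_const_div_atTop_nhds_zero_nat (|c| * C ^ 2))
  have hnonneg : 0 ≤ ∑ k ∈ range M, (u M (k + 1) - u M k) * u M (k + 1) :=
    sum_nonneg fun k _ =>
      mul_nonneg (sub_nonneg.2 (hu M k.le_succ)) ((h0 M).trans (hu M (k + 1).zero_le))
  have hle := (hu M).sum_range_sub_mul_le_sq_sub_sq (h0 M) M
  have huM : 0 ≤ u M M := (h0 M).trans (hu M M.zero_le)
  have hsq : u M M ^ 2 ≤ C ^ 2 := pow_le_pow_left₀ huM (hC M) 2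
  rw [norm_mul, norm_div, Real.norm_natCast, Real.norm_eq_abs, Real.norm_of_nonneg hnonneg,
    div_mul_eq_mul_div, mul_div_assoc, mul_div_assoc]
  gcongr
  nlinarith [sq_nonneg (u M 0)]

section ToyModel

variable {a b : ℝ}

lemma monotoneOn_one_sub_div (ha : 0 ≤ a) : MonotoneOn (fun s => 1 - a / s) (Ioi 0) :=
  fun _ hs _ _ hst => sub_le_sub_left (div_le_div_of_nonneg_left ha hs hst) 1

lemma monotoneOn_one_sub_div_sq (ha : 0 < a) : MonotoneOn (fun s => (1 - a / s) ^ 2) (Ici a) :=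
  fun _ hs _ ht hst => pow_le_pow_left₀ (sub_nonneg.2 ((div_le_one (ha.trans_le hs)).2 hs))
    (monotoneOn_one_sub_div ha.le (ha.trans_le hs) (ha.trans_le ht) hst) 2

lemma integral_one_sub_div_sq_pos (ha : 0 < a) (hab : a < b) :
    0 < ∫ s in a..b, (1 - a / s) ^ 2 := by
  refine intervalIntegral_pos_of_pos_on ?_ (fun s hs => ?_) hab
  · exact ((monotoneOn_one_sub_div_sq ha).mono
      (by simp [uIcc_of_le hab.le, Set.Icc_subset_Ici_self])).intervalIntegrable
  · exact pow_pos (sub_pos.2 ((div_lt_one (ha.trans hs.1)).2 hs.1)) 2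

lemma monotone_one_sub_div_uniformGrid (ha : 0 < a) (hab : a ≤ b) (M : ℕ) :
    Monotone fun k : ℕ => 1 - a / uniformGrid a b M k := fun i j hij =>
  monotoneOn_one_sub_div ha.le (ha.trans_le (le_uniformGrid hab i.cast_nonneg))
    (ha.trans_le (le_uniformGrid hab j.cast_nonneg)) (monotone_uniformGrid hab (Nat.cast_le.2 hij))

lemma sigmaLvl_succ (M k : ℕ) : sigmaLvl a b (M + 1) (k + 1) = uniformGrid a b M k := by
  simp only [sigmaLvl, uniformGrid]
  push_cast
  ring

lemma Dtoy_eq (ξ θ θm : ℝ) (N i : ℕ) :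
    Dtoy ξ θ θm a b N i = (θ - θm) * (1 - a / sigmaLvl a b N i)
      + (θ - ξ) * ((1 - a / sigmaLvl a b N (i + 1)) - (1 - a / sigmaLvl a b N i)) := by
  unfold Dtoy
  ring

lemma Gtoy_succ (ξ θ θm : ℝ) (hab : a ≠ b) (M : ℕ) :
    Gtoy ξ θ θm a b (M + 1) =
      2 * (θ - θm) / (b - a) * ((b - a) / M * ∑ k ∈ range M,
        (1 - a / uniformGrid a b M k) * (1 - a / uniformGrid a b M (k + 1)))
      + (θ - ξ) * (2 / M * ∑ k ∈ range M,
        ((1 - a / uniformGrid a b M (k + 1)) - (1 - a / uniformGrid a b M k))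
          * (1 - a / uniformGrid a b M (k + 1))) := by
  have hba : b - a ≠ 0 := sub_ne_zero.2 hab.symm
  rw [Gtoy, Nat.add_sub_cancel, ← Finset.Ico_add_one_right_eq_Icc, sum_Ico_eq_sum_range,
    Nat.add_sub_cancel]
  simp only [Dtoy_eq, add_comm 1, sigmaLvl_succ]
  push_cast
  simp only [add_sub_cancel_right, mul_sum, ← sum_add_distrib]
  refine sum_congr rfl fun k _ => ?_
  field_simp

lemma tendsto_riemannSum_one_sub_div_sq (ha : 0 < a) (hab : a ≤ b) :
    Tendsto (fun M : ℕ => (b - a) / M * ∑ k ∈ range M,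
        (1 - a / uniformGrid a b M k) * (1 - a / uniformGrid a b M (k + 1))) atTop
      (nhds (∫ s in a..b, (1 - a / s) ^ 2)) := by
  refine ((monotoneOn_one_sub_div_sq ha).mono Set.Icc_subset_Ici_self).tendsto_mul_sum_uniformGrid
    hab fun M k _ => ?_
  have hk : 0 ≤ 1 - a / uniformGrid a b M k := by
    simpa [ha.ne'] using monotone_one_sub_div_uniformGrid ha hab M k.zero_le
  have hk1 := monotone_one_sub_div_uniformGrid ha hab M k.le_succ
  push_cast at hk1
  constructor <;> nlinarith

lemma tendsto_two_div_mul_sum_sub_mul_one_sub_div (ha : 0 < a) (hab : a ≤ b) :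
    Tendsto (fun M : ℕ => 2 / M * ∑ k ∈ range M,
        ((1 - a / uniformGrid a b M (k + 1)) - (1 - a / uniformGrid a b M k))
          * (1 - a / uniformGrid a b M (k + 1))) atTop (nhds 0) := by
  have h := tendsto_div_mul_sum_sub_mul_self (monotone_one_sub_div_uniformGrid ha hab)
    (fun M => by simp [ha.ne'])
    (fun M => sub_le_self 1 (div_nonneg ha.le (ha.le.trans (le_uniformGrid hab M.cast_nonneg)))) 2
  push_cast at h
  exact h

end ToyModel

/-- Equation (12) of the proof of Proposition 1, case `θ⁻ ≠ θ`: the unscaled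
gradient converges to `(2(θ − θ⁻)/(σmax − σmin)) ∫_{σmin}^{σmax} (1 − σmin/σ)² dσ`,
which is nonzero. -/
theorem unscaled_gradient_limit_teacher_ne_student (ξ θ θm σmin σmax : ℝ)
    (hne : θm ≠ θ) (h0 : 0 < σmin) (h1 : σmin < σmax) :
    Tendsto (fun N : ℕ => Gtoy ξ θ θm σmin σmax N) atTop
      (nhds (2 * (θ - θm) / (σmax - σmin) * ∫ s in σmin..σmax, (1 - σmin / s) ^ 2)) ∧
    2 * (θ - θm) / (σmax - σmin) * (∫ s in σmin..σmax, (1 - σmin / s) ^ 2) ≠ 0 := by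
  refine ⟨?_, ?_⟩
  · rw [← tendsto_add_atTop_iff_nat 1]
    simp only [Gtoy_succ ξ θ θm h1.ne]
    simpa using ((tendsto_riemannSum_one_sub_div_sq h0 h1.le).const_mul _).add
      ((tendsto_two_div_mul_sum_sub_mul_one_sub_div h0 h1.le).const_mul (θ - ξ))
  · exact mul_ne_zero (div_ne_zero (mul_ne_zero two_ne_zero (sub_ne_zero.2 hne.symm))
      (sub_ne_zero.2 h1.ne')) (integral_one_sub_div_sq_pos h0 h1).ne'
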